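/- arXiv:2109.11143 — 2 statements merged into one kernel-verified Lean document; each statement's English description precedes it below -/
import Mathlib

section
/- (Main Theorem, first part.) Assume ε ∈ EuclideanSpace ℝ (Fin n) has εᵢ ∈ {−1,1} for all i and C.mulVec ε = 0, and let σ ≥ 0 satisfy ‖C.mulVec z‖² ≥ σ²·‖z‖² for every z with ⟪z, ε⟫ = 0. For y ∈ EuclideanSpace ℝ (Fin n) let S(y) = {i : Real.sign(yᵢ) ≠ εᵢ}. Then for every k and every starting vector y₀, the expectation over all length-k index sequences satisfies ∑_{j : Fin k → Fin n} (∏_{i<k} ‖c_{j(i)}‖²/‖C‖_F²) · min(#S(y_k(j, y₀)), n − #S(y_k(j, y₀))) · ‖y_k(j, y₀)‖² ≤ n·(1 − σ²/‖C‖_F²)^k·‖y₀‖². -/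
open scoped RealInnerProductSpace

/-- The `j`-th row of `C` as a vector in Euclidean space. -/
noncomputable def row {n : ℕ} (C : Matrix (Fin n) (Fin n) ℝ) (j : Fin n) :
    EuclideanSpace ℝ (Fin n) := (WithLp.equiv 2 (Fin n → ℝ)).symm (C j)

/-- Matrix-vector multiplication, landing in Euclidean space. -/
noncomputable def mulVecE {n : ℕ} (C : Matrix (Fin n) (Fin n) ℝ)
    (v : EuclideanSpace ℝ (Fin n)) : EuclideanSpace ℝ (Fin n) :=
  (WithLp.equiv 2 (Fin n → ℝ)).symm (C.mulVec ((WithLp.equiv 2 (Fin n → ℝ)) v))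

/-- Squared Frobenius norm. -/
noncomputable def frobSq {n : ℕ} (C : Matrix (Fin n) (Fin n) ℝ) : ℝ :=
  ∑ i, ∑ j, (C i j) ^ 2

open scoped Classical in
/-- Kaczmarz update for row `j`. -/
noncomputable def kacz {n : ℕ} (C : Matrix (Fin n) (Fin n) ℝ) (j : Fin n)
    (y : EuclideanSpace ℝ (Fin n)) : EuclideanSpace ℝ (Fin n) :=
  if row C j = 0 then y
  else y - ((⟪y, row C j⟫) / ‖row C j‖ ^ 2) • row C j

/-- Kaczmarz iteration along an index sequence `j : Fin k → Fin n`,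
applying `T_{j 0}` first and `T_{j (k-1)}` last. -/
noncomputable def kaczIter {n : ℕ} (C : Matrix (Fin n) (Fin n) ℝ) :
    (k : ℕ) → (Fin k → Fin n) → EuclideanSpace ℝ (Fin n) → EuclideanSpace ℝ (Fin n)
  | 0, _, y => y
  | (k + 1), j, y => kacz C (j (Fin.last k)) (kaczIter C k (fun i => j i.castSucc) y)

/-!
Put `V y = n ‖y‖² - ⟪y, ε⟫²`. As `C ε = 0`, every row of `C` is orthogonal to `ε`, so the Kaczmarz
steps preserve `⟪y, ε⟫`, while on average (row `j` drawn with probability `‖c_j‖² / ‖C‖_F²`) they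
decrease `‖y‖²` by `‖C y‖² / ‖C‖_F²`. The hypothesis on `σ`, applied to the component of `y`
orthogonal to `ε`, gives `n ‖C y‖² ≥ σ² V y`; hence `V` contracts in expectation by the factor
`1 - σ² / ‖C‖_F²` at every step, and `V y₀ ≤ n ‖y₀‖²`. Finally, in `⟪y, ε⟫ = ∑ yᵢ εᵢ` the
coordinates in `S(y)` and those outside it contribute with opposite signs, so by Cauchy–Schwarz
`⟪y, ε⟫² ≤ max(#S, n - #S) ‖y‖²`, that is, `min(#S, n - #S) ‖y‖² ≤ V y`.
-/

open Finset

lemma Real.mul_nonpos_of_sign_ne {a e : ℝ} (he : e = -1 ∨ e = 1) (h : Real.sign a ≠ e) :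
    a * e ≤ 0 := by
  rcases he with rfl | rfl
  · have : 0 ≤ a := not_lt.1 fun ha => h (Real.sign_of_neg ha)
    linarith
  · have : a ≤ 0 := not_lt.1 fun ha => h (Real.sign_of_pos ha)
    linarith

lemma Real.mul_nonneg_of_sign_eq {a e : ℝ} (h : Real.sign a = e) : 0 ≤ a * e := by
  rw [← h, mul_comm]
  exact Real.sign_mul_nonneg a

section Sign

variable {ι : Type*} [Fintype ι] {y ε : EuclideanSpace ℝ ι}

lemma norm_sq_eq_card_of_sign (hε : ∀ i, ε i = -1 ∨ ε i = 1) :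
    ‖ε‖ ^ 2 = Fintype.card ι := by
  have hε_sq (i : ι) : ε i ^ 2 = 1 := by rcases hε i with h | h <;> simp [h]
  simp [EuclideanSpace.norm_sq_eq, hε_sq]

lemma sq_sum_mul_le_card_mul_norm_sq (hε : ∀ i, ε i = -1 ∨ ε i = 1) (t : Finset ι) :
    (∑ i ∈ t, y i * ε i) ^ 2 ≤ #t * ‖y‖ ^ 2 := by
  have hε_sq (i : ι) : ε i ^ 2 = 1 := by rcases hε i with h | h <;> simp [h]
  calc (∑ i ∈ t, y i * ε i) ^ 2 ≤ #t * ∑ i ∈ t, (y i * ε i) ^ 2 := sq_sum_le_card_mul_sum_sq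
    _ = #t * ∑ i ∈ t, y i ^ 2 := by simp only [mul_pow, hε_sq, mul_one]
    _ ≤ #t * ‖y‖ ^ 2 := by
      rw [EuclideanSpace.norm_sq_eq]
      gcongr
      simpa using sum_le_sum_of_subset_of_nonneg t.subset_univ fun i _ _ => sq_nonneg (y i)

lemma inner_sq_le_max_card_mul_norm_sq (hε : ∀ i, ε i = -1 ∨ ε i = 1) {s : Finset ι}
    (hs : ∀ i, i ∈ s ↔ Real.sign (y i) ≠ ε i) :
    ⟪y, ε⟫ ^ 2 ≤ (max #s (Fintype.card ι - #s) : ℕ) * ‖y‖ ^ 2 := by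
  classical
  set a := ∑ i ∈ s, y i * ε i
  set b := ∑ i ∈ sᶜ, y i * ε i
  have ha : a ≤ 0 := sum_nonpos fun i hi => Real.mul_nonpos_of_sign_ne (hε i) ((hs i).1 hi)
  have hb : 0 ≤ b := sum_nonneg fun i hi =>
    Real.mul_nonneg_of_sign_eq (not_not.1 fun h => mem_compl.1 hi ((hs i).2 h))
  have hsplit : ⟪y, ε⟫ = a + b := by
    rw [sum_add_sum_compl, EuclideanSpace.inner_eq_star_dotProduct]
    simp [dotProduct, mul_comm]
  have ha_sq := sq_sum_mul_le_card_mul_norm_sq (y := y) hε s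
  have hb_sq := sq_sum_mul_le_card_mul_norm_sq (y := y) hε sᶜ
  rw [card_compl] at hb_sq
  have hle_max_left : (#s : ℝ) ≤ (max #s (Fintype.card ι - #s) : ℕ) := by
    exact_mod_cast le_max_left _ _
  have hle_max_right : ((Fintype.card ι - #s : ℕ) : ℝ) ≤ (max #s (Fintype.card ι - #s) : ℕ) := by
    exact_mod_cast le_max_right _ _
  rw [hsplit]
  rcases le_total 0 (a + b) with h | h <;> nlinarith [sq_nonneg ‖y‖]

lemma min_card_mul_norm_sq_le (hε : ∀ i, ε i = -1 ∨ ε i = 1) {s : Finset ι}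
    (hs : ∀ i, i ∈ s ↔ Real.sign (y i) ≠ ε i) :
    (min #s (Fintype.card ι - #s) : ℕ) * ‖y‖ ^ 2 ≤ Fintype.card ι * ‖y‖ ^ 2 - ⟪y, ε⟫ ^ 2 := by
  have hmin_add_max : ((min #s (Fintype.card ι - #s) : ℕ) : ℝ)
      + (max #s (Fintype.card ι - #s) : ℕ) = Fintype.card ι := by
    rw [← Nat.cast_add, min_add_max, Nat.add_sub_cancel' s.card_le_univ]
  nlinarith [inner_sq_le_max_card_mul_norm_sq hε hs]

end Sign

section Kaczmarz

variable {n : ℕ} (C : Matrix (Fin n) (Fin n) ℝ)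

lemma inner_row (j : Fin n) (y : EuclideanSpace ℝ (Fin n)) : ⟪y, row C j⟫ = mulVecE C y j := by
  simp [row, mulVecE, PiLp.inner_apply, Matrix.mulVec, dotProduct]

lemma norm_mulVecE_sq (y : EuclideanSpace ℝ (Fin n)) :
    ‖mulVecE C y‖ ^ 2 = ∑ j, ⟪y, row C j⟫ ^ 2 := by
  simp [EuclideanSpace.norm_sq_eq, inner_row]

lemma mulVecE_sub_smul {ε : EuclideanSpace ℝ (Fin n)} (hε : mulVecE C ε = 0) (a : ℝ)
    (y : EuclideanSpace ℝ (Fin n)) : mulVecE C (y - a • ε) = mulVecE C y := by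
  have : mulVecE C (y - a • ε) = mulVecE C y - a • mulVecE C ε := by
    ext i; simp [mulVecE, Matrix.mulVec_sub, Matrix.mulVec_smul]
  rw [this, hε, smul_zero, sub_zero]

lemma frobSq_eq_sum_norm_row_sq : frobSq C = ∑ j, ‖row C j‖ ^ 2 := by
  simp [frobSq, row, EuclideanSpace.norm_sq_eq]

lemma frobSq_pos (hC : C ≠ 0) : 0 < frobSq C := by
  obtain ⟨i, j, hij⟩ : ∃ i j, C i j ≠ 0 := by
    by_contra! h
    exact hC (Matrix.ext h)
  exact sum_pos' (fun i _ => sum_nonneg fun j _ => sq_nonneg _)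
    ⟨i, mem_univ i, sum_pos' (fun j _ => sq_nonneg _) ⟨j, mem_univ j, by positivity⟩⟩

lemma inner_kacz_of_mulVecE_eq_zero {ε : EuclideanSpace ℝ (Fin n)} (hε : mulVecE C ε = 0)
    (j : Fin n) (y : EuclideanSpace ℝ (Fin n)) : ⟪kacz C j y, ε⟫ = ⟪y, ε⟫ := by
  have hrow : ⟪row C j, ε⟫ = 0 := by rw [real_inner_comm, inner_row, hε]; rfl
  unfold kacz
  split_ifs
  · rfl
  · rw [inner_sub_left, real_inner_smul_left, hrow, mul_zero, sub_zero]

lemma norm_row_sq_mul_norm_kacz_sq (j : Fin n) (y : EuclideanSpace ℝ (Fin n)) :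
    ‖row C j‖ ^ 2 * ‖kacz C j y‖ ^ 2 = ‖row C j‖ ^ 2 * ‖y‖ ^ 2 - ⟪y, row C j⟫ ^ 2 := by
  unfold kacz
  split_ifs with h
  · simp [h]
  · have hc : ‖row C j‖ ≠ 0 := norm_ne_zero_iff.mpr h
    rw [norm_sub_sq_real, real_inner_smul_right, norm_smul, mul_pow, Real.norm_eq_abs, sq_abs]
    field_simp
    ring

lemma sum_norm_row_sq_mul_norm_kacz_sq (y : EuclideanSpace ℝ (Fin n)) :
    ∑ j, ‖row C j‖ ^ 2 * ‖kacz C j y‖ ^ 2 = frobSq C * ‖y‖ ^ 2 - ‖mulVecE C y‖ ^ 2 := by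
  simp only [norm_row_sq_mul_norm_kacz_sq, sum_sub_distrib, ← sum_mul,
    frobSq_eq_sum_norm_row_sq, norm_mulVecE_sq]

lemma norm_mulVecE_sq_le (y : EuclideanSpace ℝ (Fin n)) :
    ‖mulVecE C y‖ ^ 2 ≤ frobSq C * ‖y‖ ^ 2 := by
  rw [← sub_nonneg, ← sum_norm_row_sq_mul_norm_kacz_sq]
  positivity

lemma kaczIter_snoc {k : ℕ} (j : Fin k → Fin n) (l : Fin n) (y : EuclideanSpace ℝ (Fin n)) :
    kaczIter C (k + 1) (Fin.snoc j l) y = kacz C l (kaczIter C k j y) := by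
  simp [kaczIter]

lemma sum_prod_mul_kaczIter_le (p : Fin n → ℝ) (hp : ∀ j, 0 ≤ p j)
    (V : EuclideanSpace ℝ (Fin n) → ℝ) {q : ℝ} (hq : 0 ≤ q)
    (hV : ∀ y, ∑ j, p j * V (kacz C j y) ≤ q * V y) (k : ℕ) (y₀ : EuclideanSpace ℝ (Fin n)) :
    ∑ j : Fin k → Fin n, (∏ i, p (j i)) * V (kaczIter C k j y₀) ≤ q ^ k * V y₀ := by
  induction k with
  | zero => simp [kaczIter]
  | succ k ih =>
    calc ∑ j : Fin (k + 1) → Fin n, (∏ i, p (j i)) * V (kaczIter C (k + 1) j y₀)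
        = ∑ j : Fin k → Fin n, (∏ i, p (j i)) * ∑ l, p l * V (kacz C l (kaczIter C k j y₀)) := by
          rw [← (Fin.snocEquiv fun _ => Fin n).sum_comp, Fintype.sum_prod_type, sum_comm]
          simp [Fin.snocEquiv, kaczIter_snoc, mul_sum, Fin.prod_univ_castSucc, mul_assoc]
      _ ≤ ∑ j : Fin k → Fin n, (∏ i, p (j i)) * (q * V (kaczIter C k j y₀)) :=
          sum_le_sum fun j _ => mul_le_mul_of_nonneg_left (hV _) (prod_nonneg fun i _ => hp _)
      _ = q * ∑ j : Fin k → Fin n, (∏ i, p (j i)) * V (kaczIter C k j y₀) := by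
          rw [mul_sum]
          exact sum_congr rfl fun j _ => mul_left_comm _ _ _
      _ ≤ q ^ (k + 1) * V y₀ := by
          rw [pow_succ', mul_assoc]
          exact mul_le_mul_of_nonneg_left ih hq

variable {C} {ε : EuclideanSpace ℝ (Fin n)} {σ : ℝ}

lemma sq_mul_le_norm_sq_mul_norm_mulVecE_sq (hε : mulVecE C ε = 0)
    (hσ : ∀ z : EuclideanSpace ℝ (Fin n), ⟪z, ε⟫ = 0 → ‖mulVecE C z‖ ^ 2 ≥ σ ^ 2 * ‖z‖ ^ 2)
    (y : EuclideanSpace ℝ (Fin n)) :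
    σ ^ 2 * (‖ε‖ ^ 2 * ‖y‖ ^ 2 - ⟪y, ε⟫ ^ 2) ≤ ‖ε‖ ^ 2 * ‖mulVecE C y‖ ^ 2 := by
  rcases eq_or_ne ε 0 with rfl | hε0
  · simp
  have hN : ‖ε‖ ^ 2 ≠ 0 := by positivity
  set z := y - (⟪y, ε⟫ / ‖ε‖ ^ 2) • ε
  have hz_orth : ⟪z, ε⟫ = 0 := by
    rw [inner_sub_left, real_inner_smul_left, real_inner_self_eq_norm_sq]
    field_simp
    ring
  have hz_norm : ‖ε‖ ^ 2 * ‖z‖ ^ 2 = ‖ε‖ ^ 2 * ‖y‖ ^ 2 - ⟪y, ε⟫ ^ 2 := by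
    rw [norm_sub_sq_real, real_inner_smul_right, norm_smul, mul_pow, Real.norm_eq_abs, sq_abs]
    field_simp
    ring
  have h := hσ z hz_orth
  rw [mulVecE_sub_smul C hε] at h
  rw [← hz_norm]
  nlinarith [sq_nonneg ‖ε‖]

lemma sq_le_frobSq (hC : C ≠ 0) (hε : mulVecE C ε = 0)
    (hσ : ∀ z : EuclideanSpace ℝ (Fin n), ⟪z, ε⟫ = 0 → ‖mulVecE C z‖ ^ 2 ≥ σ ^ 2 * ‖z‖ ^ 2) :
    σ ^ 2 ≤ frobSq C := by
  obtain ⟨j, hj⟩ : ∃ j, row C j ≠ 0 := by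
    by_contra! h
    exact hC (Matrix.ext fun i l => by simpa [row] using congr($(h i) l))
  have hrow : ⟪row C j, ε⟫ = 0 := by rw [real_inner_comm, inner_row, hε]; rfl
  have := (hσ _ hrow).le.trans (norm_mulVecE_sq_le C (row C j))
  exact le_of_mul_le_mul_right this (by positivity)

lemma sum_norm_row_sq_div_mul_kacz_le (hC : C ≠ 0) (hε : mulVecE C ε = 0)
    (hσ : ∀ z : EuclideanSpace ℝ (Fin n), ⟪z, ε⟫ = 0 → ‖mulVecE C z‖ ^ 2 ≥ σ ^ 2 * ‖z‖ ^ 2)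
    (y : EuclideanSpace ℝ (Fin n)) :
    ∑ j, ‖row C j‖ ^ 2 / frobSq C * (‖ε‖ ^ 2 * ‖kacz C j y‖ ^ 2 - ⟪kacz C j y, ε⟫ ^ 2)
      ≤ (1 - σ ^ 2 / frobSq C) * (‖ε‖ ^ 2 * ‖y‖ ^ 2 - ⟪y, ε⟫ ^ 2) := by
  have hF := frobSq_pos C hC
  have hexpect :
      ∑ j, ‖row C j‖ ^ 2 / frobSq C * (‖ε‖ ^ 2 * ‖kacz C j y‖ ^ 2 - ⟪kacz C j y, ε⟫ ^ 2)
        = (‖ε‖ ^ 2 * (frobSq C * ‖y‖ ^ 2 - ‖mulVecE C y‖ ^ 2) - frobSq C * ⟪y, ε⟫ ^ 2)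
          / frobSq C := by
    rw [← sum_norm_row_sq_mul_norm_kacz_sq, frobSq_eq_sum_norm_row_sq C, mul_sum, sum_mul,
      ← sum_sub_distrib, sum_div]
    refine sum_congr rfl fun j _ => ?_
    rw [inner_kacz_of_mulVecE_eq_zero C hε]
    ring
  rw [hexpect, div_le_iff₀ hF]
  have := sq_mul_le_norm_sq_mul_norm_mulVecE_sq hε hσ y
  field_simp
  linarith

end Kaczmarz

theorem main_theorem_first_part_general {n : ℕ}
    (C : Matrix (Fin n) (Fin n) ℝ) (hC : C ≠ 0)
    (ε : EuclideanSpace ℝ (Fin n)) (hε1 : ∀ i, ε i = -1 ∨ ε i = 1)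
    (hε : mulVecE C ε = 0)
    (σ : ℝ)
    (hσ : ∀ z : EuclideanSpace ℝ (Fin n), ⟪z, ε⟫ = 0 →
      ‖mulVecE C z‖ ^ 2 ≥ σ ^ 2 * ‖z‖ ^ 2)
    (S : EuclideanSpace ℝ (Fin n) → Finset (Fin n))
    (hS : ∀ y i, i ∈ S y ↔ Real.sign (y i) ≠ ε i)
    (k : ℕ) (y₀ : EuclideanSpace ℝ (Fin n)) :
    ∑ j : Fin k → Fin n,
        (∏ i : Fin k, ‖row C (j i)‖ ^ 2 / frobSq C) *
          (((min (S (kaczIter C k j y₀)).card (n - (S (kaczIter C k j y₀)).card) : ℕ) : ℝ) *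
            ‖kaczIter C k j y₀‖ ^ 2)
      ≤ n * (1 - σ ^ 2 / frobSq C) ^ k * ‖y₀‖ ^ 2 := by
  have hF := frobSq_pos C hC
  have hw (j : Fin n) : 0 ≤ ‖row C j‖ ^ 2 / frobSq C := div_nonneg (sq_nonneg _) hF.le
  have hq : 0 ≤ 1 - σ ^ 2 / frobSq C := sub_nonneg.2 ((div_le_one hF).2 (sq_le_frobSq hC hε hσ))
  have hN : ‖ε‖ ^ 2 = n := by rw [norm_sq_eq_card_of_sign hε1, Fintype.card_fin]
  have hmin (y : EuclideanSpace ℝ (Fin n)) :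
      ((min (S y).card (n - (S y).card) : ℕ) : ℝ) * ‖y‖ ^ 2 ≤ ‖ε‖ ^ 2 * ‖y‖ ^ 2 - ⟪y, ε⟫ ^ 2 := by
    simpa [hN] using min_card_mul_norm_sq_le hε1 (hS y)
  calc _ ≤ ∑ j : Fin k → Fin n, (∏ i : Fin k, ‖row C (j i)‖ ^ 2 / frobSq C) *
          (‖ε‖ ^ 2 * ‖kaczIter C k j y₀‖ ^ 2 - ⟪kaczIter C k j y₀, ε⟫ ^ 2) :=
        sum_le_sum fun j _ => mul_le_mul_of_nonneg_left (hmin _) (prod_nonneg fun i _ => hw _)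
    _ ≤ (1 - σ ^ 2 / frobSq C) ^ k * (‖ε‖ ^ 2 * ‖y₀‖ ^ 2 - ⟪y₀, ε⟫ ^ 2) :=
        sum_prod_mul_kaczIter_le C (fun j => ‖row C j‖ ^ 2 / frobSq C) hw
          (fun y => ‖ε‖ ^ 2 * ‖y‖ ^ 2 - ⟪y, ε⟫ ^ 2) hq
          (sum_norm_row_sq_div_mul_kacz_le hC hε hσ) k y₀
    _ ≤ n * (1 - σ ^ 2 / frobSq C) ^ k * ‖y₀‖ ^ 2 := by
        rw [hN, mul_sub, ← mul_assoc, mul_comm (_ ^ k)]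
        exact sub_le_self _ (by positivity)

/-- **Main Theorem, first part.** The expected value of
`min(#S, n - #S) · ‖y_k‖²` decays geometrically along the random Kaczmarz
iteration. -/
theorem main_theorem_first_part {n : ℕ} (hn : 0 < n)
    (C : Matrix (Fin n) (Fin n) ℝ) (hC : C ≠ 0)
    (ε : EuclideanSpace ℝ (Fin n)) (hε1 : ∀ i, ε i = -1 ∨ ε i = 1)
    (hε : mulVecE C ε = 0)
    (σ : ℝ) (hσ0 : 0 ≤ σ)
    (hσ : ∀ z : EuclideanSpace ℝ (Fin n), ⟪z, ε⟫ = 0 →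
      ‖mulVecE C z‖ ^ 2 ≥ σ ^ 2 * ‖z‖ ^ 2)
    (S : EuclideanSpace ℝ (Fin n) → Finset (Fin n))
    (hS : ∀ y i, i ∈ S y ↔ Real.sign (y i) ≠ ε i)
    (k : ℕ) (y₀ : EuclideanSpace ℝ (Fin n)) :
    ∑ j : Fin k → Fin n,
        (∏ i : Fin k, ‖row C (j i)‖ ^ 2 / frobSq C) *
          (((min (S (kaczIter C k j y₀)).card (n - (S (kaczIter C k j y₀)).card) : ℕ) : ℝ) *
            ‖kaczIter C k j y₀‖ ^ 2)
      ≤ n * (1 - σ ^ 2 / frobSq C) ^ k * ‖y₀‖ ^ 2 :=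
  main_theorem_first_part_general C hC ε hε1 hε σ hσ S hS k y₀
end

section
/- (Main Theorem, second part.) Assume ε ∈ EuclideanSpace ℝ (Fin n) has εᵢ ∈ {−1,1} for all i and C.mulVec ε = 0. Let ρ > 0 and let μ be the uniform probability measure on the sphere {y ∈ EuclideanSpace ℝ (Fin n) : ‖y‖ = ρ}. Then for every k and every index sequence j : Fin k → Fin n, ∫ ‖y_k(j, y₀)‖² dμ(y₀) ≥ ρ²/n. In particular, if the initial vector is chosen uniformly at random from a sphere of radius ρ centered at the origin, then the expected squared norm of every iterate is at least ρ²/n. -/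
/-!
Each Kaczmarz step is the orthogonal projection onto the hyperplane orthogonal to a row of `C`,
and every row is orthogonal to `ε`. Hence every step fixes `⟪y, ε⟫`, and Cauchy–Schwarz gives
`‖y_k‖ ≥ |⟪y₀, w⟫|` for the unit vector `w = ε / ‖ε‖`. For `x` uniform on the unit sphere,
`⟪x, u⟫²` has mean `‖u‖² / n`: a reflection exchanges any two vectors of equal norm, so by
rotation invariance the mean depends only on `‖u‖`, and summing over an orthonormal basis
gives `‖u‖²`.
-/

open scoped RealInnerProductSpace

open MeasureTheory
open Metric Set
open scoped Pointwise

theorem MeasureTheory.average_mono {α : Type*} {m : MeasurableSpace α} {μ : Measure α}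
    {f g : α → ℝ} (hf : Integrable f μ) (hg : Integrable g μ) (hfg : f ≤ g) :
    ⨍ x, f x ∂μ ≤ ⨍ x, g x ∂μ := by
  rw [average_eq, average_eq]
  exact smul_le_smul_of_nonneg_left (integral_mono hf hg hfg) (inv_nonneg.mpr measureReal_nonneg)

section ToSphere

variable {E : Type*} [NormedAddCommGroup E] [NormedSpace ℝ E] [MeasurableSpace E] [BorelSpace E]

theorem MeasureTheory.Measure.map_linearIsometryEquiv_map_coe_toSphere (μ : Measure E)
    (e : E ≃ₗᵢ[ℝ] E) (he : MeasurePreserving e μ μ) :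
    (μ.toSphere.map ((↑) : sphere (0 : E) 1 → E)).map e = μ.toSphere.map (↑) := by
  ext s hs
  have hs' : MeasurableSet (e ⁻¹' s) := e.continuous.measurable hs
  rw [Measure.map_apply e.continuous.measurable hs,
    Measure.map_apply measurable_subtype_coe hs', Measure.map_apply measurable_subtype_coe hs,
    Measure.toSphere_apply' _ (measurable_subtype_coe hs'),
    Measure.toSphere_apply' _ (measurable_subtype_coe hs),
    Subtype.image_preimage_coe, Subtype.image_preimage_coe]
  congr 1
  have hsphere : sphere (0 : E) 1 ∩ e ⁻¹' s = e ⁻¹' (sphere 0 1 ∩ s) := by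
    rw [preimage_inter, e.preimage_sphere, map_zero]
  have hsmul : Ioo (0 : ℝ) 1 • e ⁻¹' (sphere 0 1 ∩ s) =
      e ⁻¹' (Ioo (0 : ℝ) 1 • (sphere 0 1 ∩ s)) := by
    have h := image_image2_distrib_right (f := (· • ·)) (f' := (· • ·)) (g := e.symm)
      (g' := e.symm) (s := Ioo (0 : ℝ) 1) (t := sphere (0 : E) 1 ∩ s)
      fun a b => e.symm.map_smul a b
    simpa only [image2_smul, e.symm.image_eq_preimage_symm, e.symm_symm] using h.symm
  rw [hsphere, hsmul, he.measure_preimage_emb e.toHomeomorph.measurableEmbedding]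

theorem MeasureTheory.Measure.integral_toSphere_comp_linearIsometryEquiv {F : Type*}
    [NormedAddCommGroup F] [NormedSpace ℝ F] (μ : Measure E) (e : E ≃ₗᵢ[ℝ] E)
    (he : MeasurePreserving e μ μ) (f : E → F) :
    ∫ x : sphere (0 : E) 1, f (e x) ∂μ.toSphere = ∫ x : sphere (0 : E) 1, f x ∂μ.toSphere := by
  have hcoe : MeasurableEmbedding ((↑) : sphere (0 : E) 1 → E) :=
    MeasurableEmbedding.subtype_coe isClosed_sphere.measurableSet
  calc ∫ x : sphere (0 : E) 1, f (e x) ∂μ.toSphere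
      = ∫ y, f (e y) ∂μ.toSphere.map (↑) := (hcoe.integral_map (f ∘ e)).symm
    _ = ∫ y, f y ∂(μ.toSphere.map (↑)).map e :=
        (e.toHomeomorph.measurableEmbedding.integral_map f).symm
    _ = ∫ x : sphere (0 : E) 1, f x ∂μ.toSphere := by
        rw [μ.map_linearIsometryEquiv_map_coe_toSphere e he, hcoe.integral_map]

end ToSphere

section InnerSq

variable {E : Type*} [NormedAddCommGroup E] [InnerProductSpace ℝ E] [FiniteDimensional ℝ E]
  [MeasurableSpace E] [BorelSpace E]

theorem integrable_inner_sq_toSphere (u : E) :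
    Integrable (fun x : sphere (0 : E) 1 ↦ ⟪(x : E), u⟫ ^ 2) (volume : Measure E).toSphere :=
  ((continuous_subtype_val.inner continuous_const).pow 2).integrable_of_hasCompactSupport
    (HasCompactSupport.of_compactSpace _)

theorem integral_inner_sq_toSphere_congr {u v : E} (h : ‖u‖ = ‖v‖) :
    ∫ x : sphere (0 : E) 1, ⟪(x : E), u⟫ ^ 2 ∂(volume : Measure E).toSphere =
      ∫ x : sphere (0 : E) 1, ⟪(x : E), v⟫ ^ 2 ∂(volume : Measure E).toSphere := by
  set e := Submodule.reflection (ℝ ∙ (u - v))ᗮ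
  have heu : e u = v := Submodule.reflection_sub h
  simp_rw [← e.inner_map_map _ u, heu]
  exact volume.integral_toSphere_comp_linearIsometryEquiv e e.measurePreserving (⟪·, v⟫ ^ 2)

theorem finrank_mul_integral_inner_sq_toSphere (u : E) :
    Module.finrank ℝ E * ∫ x : sphere (0 : E) 1, ⟪(x : E), u⟫ ^ 2 ∂(volume : Measure E).toSphere =
      ‖u‖ ^ 2 * (volume : Measure E).toSphere.real univ := by
  let b := stdOrthonormalBasis ℝ E
  have hsum (x : sphere (0 : E) 1) : ∑ i, ⟪(x : E), ‖u‖ • b i⟫ ^ 2 = ‖u‖ ^ 2 := by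
    simp_rw [real_inner_smul_right, mul_pow, ← Finset.mul_sum, b.sum_sq_inner_left,
      norm_eq_of_mem_sphere x, one_pow, mul_one]
  calc Module.finrank ℝ E * ∫ x : sphere (0 : E) 1, ⟪(x : E), u⟫ ^ 2 ∂volume.toSphere
      = ∑ i, ∫ x : sphere (0 : E) 1, ⟪(x : E), ‖u‖ • b i⟫ ^ 2 ∂volume.toSphere := by
        have hb (i) : ‖‖u‖ • b i‖ = ‖u‖ := by simp [norm_smul]
        simp [← integral_inner_sq_toSphere_congr (hb _).symm]
    _ = ∫ x : sphere (0 : E) 1, ∑ i, ⟪(x : E), ‖u‖ • b i⟫ ^ 2 ∂volume.toSphere :=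
        (integral_finsetSum _ fun i _ ↦ integrable_inner_sq_toSphere _).symm
    _ = ‖u‖ ^ 2 * (volume : Measure E).toSphere.real univ := by
        simp [hsum, mul_comm]

theorem average_inner_sq_toSphere (u : E) :
    ⨍ x : sphere (0 : E) 1, ⟪(x : E), u⟫ ^ 2 ∂(volume : Measure E).toSphere =
      ‖u‖ ^ 2 / Module.finrank ℝ E := by
  rw [average_eq, smul_eq_mul]
  rcases eq_or_ne (Module.finrank ℝ E) 0 with h | h
  · simp [(volume : Measure E).toSphere_eq_zero_iff_finrank.mpr h, h]
  · have : Nontrivial E := Module.nontrivial_of_finrank_pos (Nat.pos_of_ne_zero h)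
    have : NeZero (volume : Measure E).toSphere := ⟨Measure.toSphere_ne_zero _⟩
    have hpos : 0 < (volume : Measure E).toSphere.real univ := measureReal_univ_pos
    rw [inv_mul_eq_div, div_eq_div_iff hpos.ne' (by exact_mod_cast h)]
    linear_combination finrank_mul_integral_inner_sq_toSphere u

end InnerSq

section Kaczmarz

variable {n : ℕ} (C : Matrix (Fin n) (Fin n) ℝ)

theorem mulVecE_apply (v : EuclideanSpace ℝ (Fin n)) (l : Fin n) :
    mulVecE C v l = ⟪row C l, v⟫ := by
  simp [mulVecE, row, Matrix.mulVec, dotProduct, PiLp.inner_apply, mul_comm]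

theorem kacz_eq_starProjection (l : Fin n) : kacz C l = (ℝ ∙ row C l)ᗮ.starProjection := by
  funext y
  rw [Submodule.starProjection_orthogonal_val, Submodule.starProjection_singleton, kacz]
  split_ifs with h
  · simp [h]
  · rw [real_inner_comm]
    rfl

theorem continuous_kaczIter : ∀ (k : ℕ) (j : Fin k → Fin n), Continuous (kaczIter C k j)
  | 0, _ => continuous_id
  | k + 1, j => by
    change Continuous (kacz C _ ∘ kaczIter C k _)
    rw [kacz_eq_starProjection]
    exact (ContinuousLinearMap.continuous _).comp (continuous_kaczIter k _)

theorem inner_kaczIter_of_forall_inner_row_eq_zero {w : EuclideanSpace ℝ (Fin n)}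
    (hw : ∀ l, ⟪row C l, w⟫ = 0) :
    ∀ (k : ℕ) (j : Fin k → Fin n) (y : EuclideanSpace ℝ (Fin n)),
      ⟪kaczIter C k j y, w⟫ = ⟪y, w⟫
  | 0, _, _ => rfl
  | k + 1, j, y => by
    have hw_mem : w ∈ (ℝ ∙ row C (j (Fin.last k)))ᗮ :=
      Submodule.mem_orthogonal_singleton_iff_inner_right.mpr (hw _)
    rw [kaczIter, kacz_eq_starProjection, Submodule.inner_starProjection_left_eq_right,
      Submodule.starProjection_eq_self_iff.mpr hw_mem,
      inner_kaczIter_of_forall_inner_row_eq_zero hw k]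

theorem sq_inner_le_sq_norm_kaczIter {w : EuclideanSpace ℝ (Fin n)}
    (hw : ∀ l, ⟪row C l, w⟫ = 0) (hw_norm : ‖w‖ = 1) (k : ℕ) (j : Fin k → Fin n)
    (y : EuclideanSpace ℝ (Fin n)) : ⟪y, w⟫ ^ 2 ≤ ‖kaczIter C k j y‖ ^ 2 := by
  rw [← inner_kaczIter_of_forall_inner_row_eq_zero C hw k j]
  simpa [hw_norm] using pow_le_pow_left₀ (abs_nonneg _) (abs_real_inner_le_norm _ w) 2

end Kaczmarz

theorem main_theorem_second_part_general {n : ℕ} (hn : 0 < n)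
    (C : Matrix (Fin n) (Fin n) ℝ)
    (ε : EuclideanSpace ℝ (Fin n)) (hε1 : ∀ i, ε i = -1 ∨ ε i = 1)
    (hε : mulVecE C ε = 0)
    (ρ : ℝ)
    (μ : Measure (EuclideanSpace ℝ (Fin n)))
    (hμ : μ = Measure.map
      (fun x : Metric.sphere (0 : EuclideanSpace ℝ (Fin n)) 1 => ρ • (x : EuclideanSpace ℝ (Fin n)))
      (((volume : Measure (EuclideanSpace ℝ (Fin n))).toSphere Set.univ)⁻¹ •
        (volume : Measure (EuclideanSpace ℝ (Fin n))).toSphere))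
    (k : ℕ) (j : Fin k → Fin n) :
    (∫ y₀, ‖kaczIter C k j y₀‖ ^ 2 ∂μ) ≥ ρ ^ 2 / n := by
  have hε0 : ε ≠ 0 := fun h ↦ by simpa [h] using hε1 ⟨0, hn⟩
  set w := ‖ε‖⁻¹ • ε
  have hw_norm : ‖w‖ = 1 := norm_smul_inv_norm hε0
  have hw_row (l : Fin n) : ⟪row C l, w⟫ = 0 := by
    rw [real_inner_smul_right, ← mulVecE_apply, hε]
    simp
  have hbound (x : EuclideanSpace ℝ (Fin n)) :
      ⟪x, ρ • w⟫ ^ 2 ≤ ‖kaczIter C k j (ρ • x)‖ ^ 2 := by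
    rw [real_inner_smul_right, ← real_inner_smul_left]
    exact sq_inner_le_sq_norm_kaczIter C hw_row hw_norm k j _
  have hcont := continuous_kaczIter C k j
  have hscale : Continuous fun x : sphere (0 : EuclideanSpace ℝ (Fin n)) 1 ↦
      ρ • (x : EuclideanSpace ℝ (Fin n)) := continuous_subtype_val.const_smul ρ
  rw [hμ, integral_map (f := fun y ↦ ‖kaczIter C k j y‖ ^ 2) hscale.aemeasurable
      (hcont.norm.pow 2).aestronglyMeasurable,
    ← average_eq', ge_iff_le]
  calc ρ ^ 2 / n = ‖ρ • w‖ ^ 2 / Module.finrank ℝ (EuclideanSpace ℝ (Fin n)) := by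
        simp [norm_smul, hw_norm]
    _ = ⨍ x : sphere (0 : EuclideanSpace ℝ (Fin n)) 1, ⟪(x : EuclideanSpace ℝ (Fin n)), ρ • w⟫ ^ 2
          ∂volume.toSphere := (average_inner_sq_toSphere _).symm
    _ ≤ _ := average_mono (integrable_inner_sq_toSphere _)
        (((hcont.comp hscale).norm.pow 2).integrable_of_hasCompactSupport
          (HasCompactSupport.of_compactSpace _)) fun x ↦ hbound x

/-- **Main Theorem, second part.** If the starting vector is
chosen uniformly at random from the sphere of radius `ρ`, then the expected
squared norm of every Kaczmarz iterate is at least `ρ²/n`. The uniform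
probability measure on the sphere of radius `ρ` is obtained as the normalized
pushforward, under `x ↦ ρ • x`, of the canonical measure `volume.toSphere` on
the unit sphere. -/
theorem main_theorem_second_part {n : ℕ} (hn : 0 < n)
    (C : Matrix (Fin n) (Fin n) ℝ) (hC : C ≠ 0)
    (ε : EuclideanSpace ℝ (Fin n)) (hε1 : ∀ i, ε i = -1 ∨ ε i = 1)
    (hε : mulVecE C ε = 0)
    (ρ : ℝ) (hρ : 0 < ρ)
    (μ : Measure (EuclideanSpace ℝ (Fin n)))
    (hμ : μ = Measure.map
      (fun x : Metric.sphere (0 : EuclideanSpace ℝ (Fin n)) 1 => ρ • (x : EuclideanSpace ℝ (Fin n)))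
      (((volume : Measure (EuclideanSpace ℝ (Fin n))).toSphere Set.univ)⁻¹ •
        (volume : Measure (EuclideanSpace ℝ (Fin n))).toSphere))
    (k : ℕ) (j : Fin k → Fin n) :
    (∫ y₀, ‖kaczIter C k j y₀‖ ^ 2 ∂μ) ≥ ρ ^ 2 / n :=
  main_theorem_second_part_general hn C ε hε1 hε ρ μ hμ k j
end
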